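/- Let t₁ = 2, t_n = t_{n−1}² − t_{n−1} + 1, and T' = conv{0, t₁e₁, …, t_de_d} ⊂ ℝ^d. For i ∈ {1,…,d} let G_i = conv{0, t₁e₁, …, t_ie_i}. Then vol_{ℤ^d}(G_i) = (t_{i+1} − 1)/i! ≥ (2^{2^{i−1}} − 1)/i! and |G_i ∩ ℤ^d| ≥ 2^{2^{i−2}}. -/

import Mathlib

/-!
`G_i` is the image of the corner simplex `{x ≥ 0, ∑ x ≤ 1} ⊆ ℝ^i` under the diagonal map with
entries `t₁, …, t_i`, followed by the extension by zero `ℝ^i → ℝ^d`. The latter is an isometry,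
so it preserves the `i`-dimensional Hausdorff measure, which on `ℝ^i` is Lebesgue measure; hence
`vol(G_i) = t₁ ⋯ t_i / i! = (t_{i+1} - 1) / i!`, the volume `a^n / n!` of the corner simplex
being computed by slicing off the first coordinate. For the lattice points, the edge
`[0, t_i e_i]` of `G_i` alone contains `t_i + 1 ≥ 2^{2^{i-2}}` of them.
-/

open MeasureTheory Function

section Sylvester

variable {t : ℕ → ℤ}

lemma sylvester_succ (hrec : ∀ n : ℕ, 2 ≤ n → t n = t (n - 1) ^ 2 - t (n - 1) + 1)
    {n : ℕ} (hn : 1 ≤ n) : t (n + 1) = t n * (t n - 1) + 1 := by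
  rw [hrec (n + 1) (by omega), Nat.add_sub_cancel]
  ring

variable (h1 : t 1 = 2) (hrec : ∀ n : ℕ, 2 ≤ n → t n = t (n - 1) ^ 2 - t (n - 1) + 1)
include h1 hrec

lemma two_le_sylvester {n : ℕ} (hn : 1 ≤ n) : 2 ≤ t n := by
  induction n, hn using Nat.le_induction with
  | base => omega
  | succ n hn ih =>
    rw [sylvester_succ hrec hn]
    nlinarith

lemma prod_sylvester (n : ℕ) : ∏ m : Fin n, t (m + 1) = t (n + 1) - 1 := by
  induction n with
  | zero => simp [h1]
  | succ n ih =>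
    simp only [Fin.prod_univ_castSucc, Fin.val_castSucc, Fin.val_last]
    rw [ih, sylvester_succ hrec (by omega : 1 ≤ n + 1)]
    ring

lemma two_pow_two_pow_lt_sylvester {n : ℕ} (hn : 2 ≤ n) : 2 ^ 2 ^ (n - 2) < t n := by
  induction n, hn using Nat.le_induction with
  | base => simp [sylvester_succ hrec (le_refl 1), h1]
  | succ n hn ih =>
    have hp : (1 : ℤ) ≤ 2 ^ 2 ^ (n - 2) := one_le_pow₀ (by norm_num)
    rw [sylvester_succ hrec (by omega), show n + 1 - 2 = n - 2 + 1 by omega, pow_succ, pow_mul]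
    nlinarith

lemma two_rpow_two_rpow_le_sylvester {n : ℕ} (hn : 1 ≤ n) :
    (2 : ℝ) ^ (2 : ℝ) ^ ((n : ℝ) - 2) ≤ t n := by
  rcases hn.eq_or_lt with rfl | hn
  · calc (2 : ℝ) ^ (2 : ℝ) ^ ((1 : ℕ) - 2 : ℝ) ≤ 2 ^ (1 : ℝ) := by
          apply Real.rpow_le_rpow_of_exponent_le one_le_two
          rw [show ((1 : ℕ) - 2 : ℝ) = -1 by norm_num, Real.rpow_neg_one]
          norm_num
      _ = t 1 := by simp [h1]
  · have h := two_pow_two_pow_lt_sylvester h1 hrec hn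
    rw [← Nat.cast_ofNat (R := ℝ) (n := 2), ← Nat.cast_sub hn, Real.rpow_natCast,
      ← Nat.cast_pow, Real.rpow_natCast]
    exact_mod_cast h.le

end Sylvester

def cornerSimplex (n : ℕ) (a : ℝ) : Set (Fin n → ℝ) :=
  {x | 0 ≤ x ∧ ∑ j, x j ≤ a}

lemma isClosed_cornerSimplex (n : ℕ) (a : ℝ) : IsClosed (cornerSimplex n a) :=
  (isClosed_le continuous_const continuous_id).inter
    (isClosed_le (continuous_finsetSum _ fun j _ => continuous_apply j) continuous_const)

lemma cornerSimplex_eq_empty {n : ℕ} {a : ℝ} (ha : a < 0) : cornerSimplex n a = ∅ :=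
  Set.eq_empty_of_forall_notMem fun _ hx => (Finset.sum_nonneg fun j _ => hx.1 j).not_gt
    (hx.2.trans_lt ha)

lemma cons_mem_cornerSimplex {n : ℕ} {a s : ℝ} {y : Fin n → ℝ} :
    (Fin.cons s y : Fin (n + 1) → ℝ) ∈ cornerSimplex (n + 1) a ↔
      0 ≤ s ∧ y ∈ cornerSimplex n (a - s) := by
  simp only [cornerSimplex, Set.mem_ofPred_eq, Fin.sum_cons, Pi.le_def, Fin.forall_fin_succ,
    Pi.zero_apply, Fin.cons_zero, Fin.cons_succ, le_sub_iff_add_le', and_assoc]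

lemma lintegral_sub_pow_div_factorial {a : ℝ} (ha : 0 ≤ a) (n : ℕ) :
    ∫⁻ s in Set.Icc 0 a, ENNReal.ofReal ((a - s) ^ n / n.factorial) =
      ENNReal.ofReal (a ^ (n + 1) / (n + 1).factorial) := by
  rw [← ofReal_integral_eq_lintegral_ofReal (by fun_prop : Continuous _).integrableOn_Icc
    ((ae_restrict_iff' measurableSet_Icc).2 (.of_forall fun s hs =>
      div_nonneg (pow_nonneg (sub_nonneg.2 hs.2) n) (Nat.cast_nonneg _))),
    integral_Icc_eq_integral_Ioc, ← intervalIntegral.integral_of_le ha,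
    intervalIntegral.integral_comp_sub_left (fun s => s ^ n / (n.factorial : ℝ)),
    intervalIntegral.integral_div, integral_pow, Nat.factorial_succ]
  congr 1
  push_cast
  field_simp
  ring

lemma volume_cornerSimplex (n : ℕ) {a : ℝ} (ha : 0 ≤ a) :
    volume (cornerSimplex n a) = ENNReal.ofReal (a ^ n / n.factorial) := by
  induction n generalizing a with
  | zero =>
    have : cornerSimplex 0 a = Set.univ := Set.eq_univ_of_forall fun x => by
      simp [cornerSimplex, ha, Subsingleton.elim x 0]
    rw [this, volume_pi, Measure.pi_univ]
    simp
  | succ n ih =>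
    set e := MeasurableEquiv.piFinSuccAbove (fun _ : Fin (n + 1) => ℝ) 0
    set T := e.symm ⁻¹' cornerSimplex (n + 1) a
    have hT : MeasurableSet T :=
      (isClosed_cornerSimplex _ _).measurableSet.preimage e.symm.measurable
    have hslice (s : ℝ) : volume (Prod.mk s ⁻¹' T) = (Set.Icc 0 a).indicator
        (fun s => ENNReal.ofReal ((a - s) ^ n / n.factorial)) s := by
      have : Prod.mk s ⁻¹' T = if 0 ≤ s then cornerSimplex n (a - s) else ∅ := by
        ext y
        split_ifs with hs <;>
          simp [T, e, MeasurableEquiv.piFinSuccAbove_symm_apply, Fin.consEquiv,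
            cons_mem_cornerSimplex, hs]
      by_cases hs : 0 ≤ s
      · by_cases hsa : s ≤ a
        · rw [this, if_pos hs, ih (sub_nonneg.2 hsa),
            Set.indicator_of_mem (Set.mem_Icc.2 ⟨hs, hsa⟩)]
        · rw [this, if_pos hs, cornerSimplex_eq_empty (by linarith),
            Set.indicator_of_notMem fun h => hsa h.2, measure_empty]
      · rw [this, if_neg hs, Set.indicator_of_notMem fun h => hs h.1, measure_empty]
    rw [← (volume_preserving_piFinSuccAbove (fun _ : Fin (n + 1) => ℝ) 0).symm.measure_preimage
      (isClosed_cornerSimplex _ _).measurableSet.nullMeasurableSet, Measure.volume_eq_prod,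
      Measure.prod_apply hT]
    simp only [hslice]
    rw [lintegral_indicator measurableSet_Icc, lintegral_sub_pow_div_factorial ha]

lemma convex_cornerSimplex (n : ℕ) (a : ℝ) : Convex ℝ (cornerSimplex n a) :=
  (convex_Ici (0 : Fin n → ℝ)).inter (convex_halfSpace_le (f := fun x : Fin n → ℝ => ∑ j, x j)
    (IsLinearMap.mk (fun x y => Finset.sum_add_distrib) fun c x => by
      simp [Finset.mul_sum]) a)

lemma convexHull_zero_single_eq_cornerSimplex (n : ℕ) :
    convexHull ℝ (insert 0 (Set.range fun m : Fin n => Pi.single m 1)) = cornerSimplex n 1 := by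
  refine (convexHull_min ?_ (convex_cornerSimplex n 1)).antisymm fun x ⟨hx0, hx1⟩ => ?_
  · rintro _ (rfl | ⟨m, rfl⟩)
    · simp [cornerSimplex]
    · exact ⟨Pi.single_nonneg.2 zero_le_one, by simp⟩
  · have := (convex_convexHull ℝ (insert 0 (Set.range fun m : Fin n => Pi.single m 1))).sum_mem
      (t := Finset.univ) (w := fun o : Option (Fin n) => o.elim (1 - ∑ j, x j) x)
      (z := fun o : Option (Fin n) => o.elim (0 : Fin n → ℝ) fun m => Pi.single m 1)
      (by rintro (_ | m) -; exacts [sub_nonneg.2 hx1, hx0 m]) (by simp [Fintype.sum_option])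
      (by rintro (_ | m) -; exacts [subset_convexHull ℝ _ (.inl rfl),
        subset_convexHull ℝ _ (.inr ⟨m, rfl⟩)])
    simpa [Fintype.sum_option, ← Pi.single_smul', Finset.univ_sum_single x] using this

section ExtendByZero

variable {ι η : Type*} {f : ι → η}

lemma extend_single_zero [DecidableEq ι] [DecidableEq η] (hf : Injective f) (m : ι) (a : ℝ) :
    extend f (Pi.single m a) 0 = Pi.single (f m) a := by
  funext j
  by_cases hj : ∃ k, f k = j
  · obtain ⟨k, rfl⟩ := hj
    simp [hf.extend_apply, Pi.single_apply, hf.eq_iff]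
  · rw [extend_apply' _ _ _ hj, Pi.single_eq_of_ne (fun h => hj ⟨m, h.symm⟩), Pi.zero_apply]

lemma norm_extend_zero [Fintype ι] [Fintype η] (hf : Injective f) (x : ι → ℝ) :
    ‖extend f x 0‖ = ‖x‖ := by
  refine le_antisymm ((pi_norm_le_iff_of_nonneg (norm_nonneg x)).2 fun j => ?_)
    ((pi_norm_le_iff_of_nonneg (norm_nonneg _)).2 fun k => ?_)
  · by_cases hj : ∃ k, f k = j
    · obtain ⟨k, rfl⟩ := hj
      rw [hf.extend_apply]
      exact norm_le_pi_norm x k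
    · simp [extend_apply' _ _ _ hj]
  · simpa [hf.extend_apply] using norm_le_pi_norm (extend f x 0) (f k)

lemma hausdorffMeasure_image_extendByZero [Fintype ι] [Fintype η] (hf : Injective f)
    (s : Set (ι → ℝ)) :
    μH[Fintype.card ι] (ExtendByZero.linearMap ℝ f '' s) = volume s := by
  have hiso : Isometry (ExtendByZero.linearMap ℝ f) :=
    AddMonoidHomClass.isometry_of_norm _ (norm_extend_zero hf)
  rw [hiso.hausdorffMeasure_image (.inl (Nat.cast_nonneg _)), hausdorffMeasure_pi_real]

end ExtendByZero

def intPoints {ι : Type*} (S : Set (ι → ℝ)) : Set (ι → ℤ) :=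
  {x | (fun j => (x j : ℝ)) ∈ S}

lemma finite_intPoints {ι : Type*} [Finite ι] {K : Set (ι → ℝ)} (hK : IsCompact K) :
    (intPoints K).Finite :=
  ((Topology.IsClosedEmbedding.piMap fun _ => Int.isClosedEmbedding_coe_real).isCompact_preimage
    hK).finite_of_discrete

lemma add_one_le_ncard_intPoints {ι : Type*} [DecidableEq ι] {S : Set (ι → ℝ)}
    (hS : Convex ℝ S) (hfin : (intPoints S).Finite) (h0 : 0 ∈ S) (j : ι) (N : ℕ)
    (hN : Pi.single j (N : ℝ) ∈ S) : N + 1 ≤ (intPoints S).ncard := by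
  have hmem : ∀ k ∈ Finset.range (N + 1), Pi.single j (k : ℤ) ∈ intPoints S := by
    intro k hk
    have hkN : k ≤ N := Finset.mem_range_succ_iff.1 hk
    have hk : (fun i => ((Pi.single j (k : ℤ) : ι → ℤ) i : ℝ)) =
        ((k : ℝ) / N) • Pi.single j (N : ℝ) := by
      rw [← Pi.single_smul', smul_eq_mul, div_mul_cancel_of_imp fun h => by
        norm_cast at h ⊢
        omega]
      funext i
      simp [Pi.single_apply]
    change _ ∈ S
    rw [hk]
    exact hS.smul_mem_of_zero_mem h0 hN
      ⟨by positivity, div_le_one_of_le₀ (by exact_mod_cast hkN) (Nat.cast_nonneg _)⟩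
  calc N + 1 = (Finset.range (N + 1) : Set ℕ).ncard := by simp
    _ ≤ _ := Set.ncard_le_ncard_of_injOn _ hmem (fun k _ l _ h => by
      simpa using congrFun h j) hfin

lemma volume_diagonal_image_cornerSimplex {n : ℕ} (c : Fin n → ℝ) :
    volume (Matrix.toLin' (Matrix.diagonal c) '' cornerSimplex n 1) =
      ENNReal.ofReal (|∏ m, c m| / n.factorial) := by
  rw [Measure.addHaar_image_linearMap, LinearMap.det_toLin', Matrix.det_diagonal,
    volume_cornerSimplex n zero_le_one, one_pow, ← ENNReal.ofReal_mul (abs_nonneg _), mul_one_div]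

section AxisSimplex

variable {η : Type*} [DecidableEq η] {n : ℕ} {f : Fin n → η}

def axisSimplex (f : Fin n → η) (c : Fin n → ℝ) : Set (η → ℝ) :=
  convexHull ℝ (insert 0 (Set.range fun m => Pi.single (f m) (c m)))

lemma axisSimplex_eq_image (hf : Injective f) (c : Fin n → ℝ) :
    axisSimplex f c =
      ExtendByZero.linearMap ℝ f '' (Matrix.toLin' (Matrix.diagonal c) '' cornerSimplex n 1) := by
  have hvertex (m : Fin n) : ExtendByZero.linearMap ℝ f
      (Matrix.toLin' (Matrix.diagonal c) (Pi.single m 1)) = Pi.single (f m) (c m) := by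
    rw [Matrix.toLin'_apply, Matrix.diagonal_mulVec_single, mul_one]
    exact extend_single_zero hf m (c m)
  rw [← convexHull_zero_single_eq_cornerSimplex, LinearMap.image_convexHull,
    LinearMap.image_convexHull, Set.image_insert_eq, Set.image_insert_eq, map_zero, map_zero,
    ← Set.range_comp, ← Set.range_comp]
  simp only [comp_def, hvertex]
  rfl

lemma hausdorffMeasure_axisSimplex [Fintype η] (hf : Injective f) (c : Fin n → ℝ) :
    μH[n] (axisSimplex f c) = ENNReal.ofReal (|∏ m, c m| / n.factorial) := by
  have h := hausdorffMeasure_image_extendByZero hf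
    (Matrix.toLin' (Matrix.diagonal c) '' cornerSimplex n 1)
  rw [Fintype.card_fin] at h
  rw [axisSimplex_eq_image hf, h, volume_diagonal_image_cornerSimplex]

lemma add_one_le_ncard_intPoints_axisSimplex [Finite η] (c : Fin n → ℝ) (m : Fin n) (N : ℕ)
    (hN : c m = N) : N + 1 ≤ (intPoints (axisSimplex f c)).ncard :=
  add_one_le_ncard_intPoints (convex_convexHull ℝ _)
    (finite_intPoints (((Set.finite_range _).insert 0).isCompact_convexHull ℝ))
    (subset_convexHull ℝ _ (.inl rfl)) (f m) N (hN ▸ subset_convexHull ℝ _ (.inr ⟨m, rfl⟩))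

end AxisSimplex

lemma hausdorffMeasure_parallelepiped_single {ι η : Type*} [Fintype ι] [Fintype η]
    [DecidableEq ι] [DecidableEq η] {f : ι → η} (hf : Injective f) :
    μH[Fintype.card ι] (parallelepiped fun m => (Pi.single (f m) 1 : η → ℝ)) = 1 := by
  have : (fun m => (Pi.single (f m) 1 : η → ℝ)) =
      ExtendByZero.linearMap ℝ f ∘ fun m => Pi.single m 1 :=
    funext fun m => (extend_single_zero hf m 1).symm
  rw [this, ← image_parallelepiped, parallelepiped_single, hausdorffMeasure_image_extendByZero hf,
    Set.uIcc_of_le (by exact fun _ => zero_le_one), Real.volume_Icc_pi]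
  simp

lemma insert_zero_range_single_castLE {i d : ℕ} (hid : i ≤ d) (c : ℕ → ℝ) :
    insert 0 (Set.range fun m : Fin i => Pi.single (Fin.castLE hid m) (c m)) =
      {x | x = 0 ∨ ∃ k : Fin d, (k : ℕ) < i ∧ x = Pi.single k (c k)} := by
  ext x
  simp only [Set.mem_insert_iff, Set.mem_range, Set.mem_ofPred_eq]
  refine or_congr_right ⟨?_, ?_⟩
  · rintro ⟨m, rfl⟩
    exact ⟨Fin.castLE hid m, m.isLt, rfl⟩
  · rintro ⟨k, hk, rfl⟩
    exact ⟨⟨k, hk⟩, rfl⟩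

theorem stmt15_general (d : ℕ) (t : ℕ → ℤ) (h1 : t 1 = 2)
    (hrec : ∀ n : ℕ, 2 ≤ n → t n = t (n - 1) ^ 2 - t (n - 1) + 1)
    (i : ℕ) (hi : 1 ≤ i) (hid : i ≤ d)
    (G : Set (Fin d → ℝ))
    (hG : G = convexHull ℝ {x : Fin d → ℝ | x = 0 ∨
      ∃ k : Fin d, (k : ℕ) < i ∧
        x = fun j => if j = k then ((t ((k : ℕ) + 1) : ℤ) : ℝ) else 0})
    (b : Fin i → Fin d → ℝ)
    (hb : b = fun (m : Fin i) => fun (j : Fin d) => if (j : ℕ) = (m : ℕ) then (1 : ℝ) else 0) :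
    μH[(i : ℝ)] G =
      ENNReal.ofReal ((((t (i + 1) : ℤ) : ℝ) - 1) / (i.factorial : ℝ)) *
        μH[(i : ℝ)] (parallelepiped b) ∧
    ENNReal.ofReal (((2 : ℝ) ^ (2 ^ (i - 1)) - 1) / (i.factorial : ℝ)) *
        μH[(i : ℝ)] (parallelepiped b) ≤ μH[(i : ℝ)] G ∧
    (2 : ℝ) ^ ((2 : ℝ) ^ ((i : ℝ) - 2)) ≤
      (Set.ncard {x : Fin d → ℤ | (fun j => ((x j : ℤ) : ℝ)) ∈ G} : ℝ) := by
  have hG' : G = axisSimplex (Fin.castLE hid) fun m => (t (m + 1) : ℝ) := by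
    simp only [← Pi.single_apply] at hG
    rw [hG, axisSimplex, insert_zero_range_single_castLE hid fun k => (t (k + 1) : ℝ)]
  have hb' : b = fun m => Pi.single (Fin.castLE hid m) 1 := by
    rw [hb]
    funext m j
    simp [Pi.single_apply, Fin.ext_iff]
  have hvol : μH[(i : ℝ)] G = ENNReal.ofReal ((t (i + 1) - 1) / i.factorial) := by
    have hprod : ∏ m : Fin i, (t (m + 1) : ℝ) = t (i + 1) - 1 := by
      exact_mod_cast prod_sylvester h1 hrec i
    have ht : (2 : ℝ) ≤ t (i + 1) := by exact_mod_cast two_le_sylvester h1 hrec (by omega)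
    rw [hG', hausdorffMeasure_axisSimplex (Fin.castLE_injective hid), hprod,
      abs_of_nonneg (by linarith)]
  have hP := hausdorffMeasure_parallelepiped_single (Fin.castLE_injective hid)
  rw [Fintype.card_fin, ← hb'] at hP
  rw [hP, mul_one, mul_one]
  refine ⟨hvol, hvol ▸ ?_, ?_⟩
  · have h := two_pow_two_pow_lt_sylvester h1 hrec (by omega : 2 ≤ i + 1)
    rw [show i + 1 - 2 = i - 1 by omega] at h
    gcongr
    exact_mod_cast h.le
  · obtain ⟨N, hN⟩ := Int.eq_ofNat_of_zero_le (by linarith [two_le_sylvester h1 hrec hi] : 0 ≤ t i)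
    have hcount := add_one_le_ncard_intPoints_axisSimplex (f := Fin.castLE hid)
      (fun m => (t (m + 1) : ℝ)) ⟨i - 1, by omega⟩ N (by simp [Nat.sub_add_cancel hi, hN])
    calc (2 : ℝ) ^ (2 : ℝ) ^ ((i : ℝ) - 2) ≤ t i := two_rpow_two_rpow_le_sylvester h1 hrec hi
      _ ≤ N + 1 := by simp [hN]
      _ ≤ _ := by rw [hG']; exact_mod_cast hcount

/-- Theorem 2.II: for the simplex `T' = conv{0, t₁e₁, …, t_d e_d}` and its faces
`G_i = conv{0, t₁e₁, …, t_i e_i}` one has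
`vol_{ℤ^d}(G_i) = (t_{i+1} - 1)/i! ≥ (2^{2^{i-1}} - 1)/i!` and `|G_i ∩ ℤ^d| ≥ 2^{2^{i-2}}`.
The normalized `i`-dimensional volume of `G_i` is expressed with respect to the lattice
basis `e₁, …, e_i` of `ℤ^d ∩ span(e₁, …, e_i)` via Hausdorff measures. -/
theorem stmt15 (d : ℕ) (hd : 0 < d) (t : ℕ → ℤ) (h1 : t 1 = 2)
    (hrec : ∀ n : ℕ, 2 ≤ n → t n = t (n - 1) ^ 2 - t (n - 1) + 1)
    (i : ℕ) (hi : 1 ≤ i) (hid : i ≤ d)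
    (G : Set (Fin d → ℝ))
    (hG : G = convexHull ℝ {x : Fin d → ℝ | x = 0 ∨
      ∃ k : Fin d, (k : ℕ) < i ∧
        x = fun j => if j = k then ((t ((k : ℕ) + 1) : ℤ) : ℝ) else 0})
    (b : Fin i → Fin d → ℝ)
    (hb : b = fun (m : Fin i) => fun (j : Fin d) => if (j : ℕ) = (m : ℕ) then (1 : ℝ) else 0) :
    μH[(i : ℝ)] G =
      ENNReal.ofReal ((((t (i + 1) : ℤ) : ℝ) - 1) / (i.factorial : ℝ)) *
        μH[(i : ℝ)] (parallelepiped b) ∧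
    ENNReal.ofReal (((2 : ℝ) ^ (2 ^ (i - 1)) - 1) / (i.factorial : ℝ)) *
        μH[(i : ℝ)] (parallelepiped b) ≤ μH[(i : ℝ)] G ∧
    (2 : ℝ) ^ ((2 : ℝ) ^ ((i : ℝ) - 2)) ≤
      (Set.ncard {x : Fin d → ℤ | (fun j => ((x j : ℤ) : ℝ)) ∈ G} : ℝ) :=
  stmt15_general d t h1 hrec i hi hid G hG b hb
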